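/- Let α₁, α₂ : ℝ → ℝ be smooth functions with α₁' = α₂' = τ and cos αᵢ(t) ≠ 0 for all t, and let ηᵢ = ξ + r·n − r·tan(αᵢ)·b (i = 1, 2) be two Monge evolutes of ξ. Then the angle between the vectors η₁(t) − ξ(t) and η₂(t) − ξ(t) is independent of t; i.e. the corresponding points of two different Monge evolutes are seen from the corresponding point of the curve under a constant angle. -/

import Mathlib

open scoped RealInnerProductSpace

noncomputable section

/-- The determinant of the 3×3 matrix with rows `u`, `v`, `w`. -/
def det3 (u v w : EuclideanSpace ℝ (Fin 3)) : ℝ :=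
  u 0 * (v 1 * w 2 - v 2 * w 1) - u 1 * (v 0 * w 2 - v 2 * w 0)
    + u 2 * (v 0 * w 1 - v 1 * w 0)

/-- The cross product of two vectors in `ℝ³`. -/
def cross3 (u v : EuclideanSpace ℝ (Fin 3)) : EuclideanSpace ℝ (Fin 3) :=
  (WithLp.equiv 2 (Fin 3 → ℝ)).symm
    ![u 1 * v 2 - u 2 * v 1, u 2 * v 0 - u 0 * v 2, u 0 * v 1 - u 1 * v 0]

lemma inner3 (u v : EuclideanSpace ℝ (Fin 3)) :
    (⟪u, v⟫ : ℝ) = u 0 * v 0 + u 1 * v 1 + u 2 * v 2 := by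
  simp [PiLp.inner_apply, Fin.sum_univ_three, RCLike.inner_apply]
  ring

lemma cross3_inner_right (u v : EuclideanSpace ℝ (Fin 3)) :
    (⟪cross3 u v, v⟫ : ℝ) = 0 := by
  simp [cross3, PiLp.inner_apply, Fin.sum_univ_three, RCLike.inner_apply,
    WithLp.equiv_symm_apply]
  ring

lemma cross3_lagrange (u v : EuclideanSpace ℝ (Fin 3)) :
    (⟪cross3 u v, cross3 u v⟫ : ℝ) = ⟪u, u⟫ * ⟪v, v⟫ - ⟪u, v⟫ ^ 2 := by
  simp only [inner3]
  simp [cross3, PiLp.inner_apply, Fin.sum_univ_three, RCLike.inner_apply,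
    WithLp.equiv_symm_apply]
  ring

theorem stmt_16
    (ξ : ℝ → EuclideanSpace ℝ (Fin 3))
    (hξ : ContDiff ℝ (⊤ : ℕ∞) ξ)
    (hunit : ∀ t, ‖deriv ξ t‖ = 1)
    (k τ r : ℝ → ℝ) (N B : ℝ → EuclideanSpace ℝ (Fin 3))
    (hk : ∀ t, k t = ‖deriv (deriv ξ) t‖)
    (hkpos : ∀ t, 0 < k t)
    (hN : ∀ t, N t = (k t)⁻¹ • deriv (deriv ξ) t)
    (hB : ∀ t, B t = cross3 (deriv ξ t) (N t))
    (hτ : ∀ t, τ t = det3 (deriv ξ t) (deriv (deriv ξ) t) (deriv (deriv (deriv ξ)) t) / (k t) ^ 2)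
    (hτne : ∀ t, τ t ≠ 0)
    (hr : ∀ t, r t = (k t)⁻¹)
    (α₁ α₂ : ℝ → ℝ) (hα₁ : ContDiff ℝ (⊤ : ℕ∞) α₁) (hα₂ : ContDiff ℝ (⊤ : ℕ∞) α₂)
    (hα₁' : ∀ t, deriv α₁ t = τ t) (hα₂' : ∀ t, deriv α₂ t = τ t)
    (hcos₁ : ∀ t, Real.cos (α₁ t) ≠ 0) (hcos₂ : ∀ t, Real.cos (α₂ t) ≠ 0)
    (η₁ η₂ : ℝ → EuclideanSpace ℝ (Fin 3))
    (hη₁ : ∀ t, η₁ t = ξ t + r t • N t - (r t * Real.tan (α₁ t)) • B t)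
    (hη₂ : ∀ t, η₂ t = ξ t + r t • N t - (r t * Real.tan (α₂ t)) • B t) :
    ∀ s u : ℝ, InnerProductGeometry.angle (η₁ s - ξ s) (η₂ s - ξ s) =
      InnerProductGeometry.angle (η₁ u - ξ u) (η₂ u - ξ u) := by
  -- ξ'' ⟂ ξ'
  have hd : Differentiable ℝ (deriv ξ) :=
    (contDiff_infty_iff_deriv.1 (hξ.of_le (by simp))).2.differentiable (by simp)
  have hperp : ∀ t, (⟪deriv (deriv ξ) t, deriv ξ t⟫ : ℝ) = 0 := by
    intro t
    have h1 : HasDerivAt (fun s => (⟪deriv ξ s, deriv ξ s⟫ : ℝ))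
        (⟪deriv ξ t, deriv (deriv ξ) t⟫ + ⟪deriv (deriv ξ) t, deriv ξ t⟫) t :=
      ((hd t).hasDerivAt).inner ℝ ((hd t).hasDerivAt)
    have h2 : (fun s => (⟪deriv ξ s, deriv ξ s⟫ : ℝ)) = fun _ => (1:ℝ) := by
      funext s; rw [real_inner_self_eq_norm_sq, hunit s]; norm_num
    rw [h2] at h1
    have h0 := (hasDerivAt_const t (1:ℝ)).unique h1
    have hc : (⟪deriv ξ t, deriv (deriv ξ) t⟫:ℝ) = ⟪deriv (deriv ξ) t, deriv ξ t⟫ :=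
      real_inner_comm _ _
    linarith
  -- frame facts
  have hNN : ∀ t, (⟪N t, N t⟫ : ℝ) = 1 := by
    intro t
    rw [hN, real_inner_smul_left, real_inner_smul_right, real_inner_self_eq_norm_sq, ← hk]
    have := (hkpos t).ne'
    field_simp
  have hTN : ∀ t, (⟪deriv ξ t, N t⟫ : ℝ) = 0 := by
    intro t
    rw [hN, real_inner_smul_right, real_inner_comm, hperp t, mul_zero]
  have hBN : ∀ t, (⟪B t, N t⟫ : ℝ) = 0 := by
    intro t; rw [hB]; exact cross3_inner_right _ _
  have hBB : ∀ t, (⟪B t, B t⟫ : ℝ) = 1 := by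
    intro t
    rw [hB, cross3_lagrange, hTN, real_inner_self_eq_norm_sq, hunit, hNN]
    norm_num
  -- δ := α₁ - α₂ is constant
  have hδ : ∀ s u : ℝ, α₁ s - α₂ s = α₁ u - α₂ u := by
    intro s u
    have hconst := is_const_of_deriv_eq_zero (f := fun t => α₁ t - α₂ t)
      ((hα₁.differentiable (by simp)).sub (hα₂.differentiable (by simp)))
      (fun x => by
        rw [deriv_fun_sub ((hα₁.differentiable (by simp)) x) ((hα₂.differentiable (by simp)) x),
          hα₁', hα₂', sub_self])
    exact hconst s u
  -- sign of g := cos α₁ * cos α₂ is constant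
  set g : ℝ → ℝ := fun t => Real.cos (α₁ t) * Real.cos (α₂ t) with hg
  have hgne : ∀ t, g t ≠ 0 := fun t => mul_ne_zero (hcos₁ t) (hcos₂ t)
  have hgcont : Continuous g :=
    (Real.continuous_cos.comp (hα₁.continuous)).mul
      (Real.continuous_cos.comp (hα₂.continuous))
  have hsign : ∀ s u : ℝ, 0 < g s → 0 < g u := by
    intro s u hs
    by_contra h
    have hu : g u < 0 := lt_of_le_of_ne (not_lt.1 h) (hgne u)
    have h0 : (0:ℝ) ∈ Set.uIcc (g s) (g u) := by
      rw [Set.mem_uIcc]; right; constructor <;> linarith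
    obtain ⟨c, _, hc⟩ := intermediate_value_uIcc (hgcont.continuousOn (s := Set.uIcc s u)) h0
    exact hgne c hc
  have habs : ∀ s u : ℝ, |g s| / g s = |g u| / g u := by
    intro s u
    rcases lt_or_gt_of_ne (hgne s) with hs | hs
    · have hu : g u < 0 := by
        by_contra h
        exact absurd (hsign u s (lt_of_le_of_ne (not_lt.1 h) (Ne.symm (hgne u)))) (not_lt.2 hs.le)
      rw [abs_of_neg hs, abs_of_neg hu, neg_div, neg_div, div_self hs.ne, div_self hu.ne]
    · rw [abs_of_pos hs, abs_of_pos (hsign s u hs), div_self hs.ne', div_self (hsign s u hs).ne']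
  -- the cosine quotient at each point
  have hQ : ∀ t : ℝ, (⟪η₁ t - ξ t, η₂ t - ξ t⟫ : ℝ) / (‖η₁ t - ξ t‖ * ‖η₂ t - ξ t‖)
      = Real.cos (α₁ t - α₂ t) * (|g t| / g t) := by
    intro t
    have hrpos : 0 < r t := by rw [hr]; exact inv_pos.2 (hkpos t)
    have hx : η₁ t - ξ t = r t • N t - (r t * Real.tan (α₁ t)) • B t := by
      rw [hη₁]; abel
    have hy : η₂ t - ξ t = r t • N t - (r t * Real.tan (α₂ t)) • B t := by
      rw [hη₂]; abel
    have hNB : (⟪N t, B t⟫ : ℝ) = 0 := by rw [real_inner_comm]; exact hBN t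
    have hNB2 : (⟪N t, B t⟫ : ℝ) = 0 := hNB
    have h1t : 1 + Real.tan (α₁ t) ^ 2 = 1 / Real.cos (α₁ t) ^ 2 := by
      rw [Real.tan_eq_sin_div_cos, div_pow]
      field_simp [hcos₁ t]
      exact Real.cos_sq_add_sin_sq _
    have h2t : 1 + Real.tan (α₂ t) ^ 2 = 1 / Real.cos (α₂ t) ^ 2 := by
      rw [Real.tan_eq_sin_div_cos, div_pow]
      field_simp [hcos₂ t]
      exact Real.cos_sq_add_sin_sq _
    have hxy : (⟪η₁ t - ξ t, η₂ t - ξ t⟫ : ℝ)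
        = r t ^ 2 * (1 + Real.tan (α₁ t) * Real.tan (α₂ t)) := by
      rw [hx, hy]
      simp only [inner_sub_left, inner_sub_right, real_inner_smul_left, real_inner_smul_right,
        hNN, hBB, hBN, hNB]
      ring
    have hxx : (⟪η₁ t - ξ t, η₁ t - ξ t⟫ : ℝ) = r t ^ 2 * (1 + Real.tan (α₁ t) ^ 2) := by
      rw [hx]
      simp only [inner_sub_left, inner_sub_right, real_inner_smul_left, real_inner_smul_right,
        hNN, hBB, hBN, hNB]
      ring
    have hyy : (⟪η₂ t - ξ t, η₂ t - ξ t⟫ : ℝ) = r t ^ 2 * (1 + Real.tan (α₂ t) ^ 2) := by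
      rw [hy]
      simp only [inner_sub_left, inner_sub_right, real_inner_smul_left, real_inner_smul_right,
        hNN, hBB, hBN, hNB]
      ring
    have hnx : ‖η₁ t - ξ t‖ = r t / |Real.cos (α₁ t)| := by
      have h2 : ‖η₁ t - ξ t‖ ^ 2 = (r t / |Real.cos (α₁ t)|) ^ 2 := by
        rw [← real_inner_self_eq_norm_sq, hxx, h1t, div_pow, sq_abs]
        ring
      have hb : (0:ℝ) ≤ r t / |Real.cos (α₁ t)| := by positivity
      calc ‖η₁ t - ξ t‖ = Real.sqrt (‖η₁ t - ξ t‖ ^ 2) :=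
            (Real.sqrt_sq (norm_nonneg _)).symm
        _ = Real.sqrt ((r t / |Real.cos (α₁ t)|) ^ 2) := by rw [h2]
        _ = r t / |Real.cos (α₁ t)| := Real.sqrt_sq hb
    have hny : ‖η₂ t - ξ t‖ = r t / |Real.cos (α₂ t)| := by
      have h2 : ‖η₂ t - ξ t‖ ^ 2 = (r t / |Real.cos (α₂ t)|) ^ 2 := by
        rw [← real_inner_self_eq_norm_sq, hyy, h2t, div_pow, sq_abs]
        ring
      have hb : (0:ℝ) ≤ r t / |Real.cos (α₂ t)| := by positivity
      calc ‖η₂ t - ξ t‖ = Real.sqrt (‖η₂ t - ξ t‖ ^ 2) :=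
            (Real.sqrt_sq (norm_nonneg _)).symm
        _ = Real.sqrt ((r t / |Real.cos (α₂ t)|) ^ 2) := by rw [h2]
        _ = r t / |Real.cos (α₂ t)| := Real.sqrt_sq hb
    rw [hxy, hnx, hny, Real.cos_sub]
    have hc1 := hcos₁ t
    have hc2 := hcos₂ t
    have hrne : r t ≠ 0 := hrpos.ne'
    simp only [hg, Real.tan_eq_sin_div_cos, abs_mul]
    rcases lt_or_gt_of_ne hc1 with h1 | h1 <;> rcases lt_or_gt_of_ne hc2 with h2 | h2
    · rw [abs_of_neg h1, abs_of_neg h2]; field_simp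
    · rw [abs_of_neg h1, abs_of_pos h2]; field_simp
    · rw [abs_of_pos h1, abs_of_neg h2]; field_simp
    · rw [abs_of_pos h1, abs_of_pos h2]; field_simp
  intro s u
  unfold InnerProductGeometry.angle
  rw [hQ s, hQ u, hδ s u, habs s u]
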